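/- Let r ≥ 1, n ≥ 1, let λ_1,…,λ_{rn} be real numbers, and let X be an r×(rn) random matrix whose entries are independent standard real Gaussian random variables N(0,1) (i.e., the law of X is the product over all entries of the standard Gaussian measure on ℝ). Then E[ (det M(λ,X))² ] = Σ_{(A_1,…,A_r) ∈ 𝒫_{r,n}} ∏_{j=1}^r Δ(A_j)². -/

import Mathlib

open scoped BigOperators
open MeasureTheory ProbabilityTheory

/-- `M(λ,X)`: the `(rn)×(rn)` matrix with `(i,j)` entry
`λ_i^{⌊(j−1)/r⌋} · X_{j − r⌊(j−1)/r⌋, i}` (written 0-based). -/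
def MagicM (r n : ℕ) (hr : 0 < r) (lam : Fin (r * n) → ℝ)
    (X : Matrix (Fin r) (Fin (r * n)) ℝ) : Matrix (Fin (r * n)) (Fin (r * n)) ℝ :=
  Matrix.of fun i j => lam i ^ (j.val / r) * X ⟨j.val % r, Nat.mod_lt _ hr⟩ i

/-- `Δ(A)`: the Vandermonde product `∏_{i,j ∈ A, i<j} (λ_j − λ_i)`. -/
def vdm {N : ℕ} (lam : Fin N → ℝ) (A : Finset (Fin N)) : ℝ :=
  ∏ p ∈ (A ×ˢ A).filter fun p => p.1 < p.2, (lam p.2 - lam p.1)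

/-- `𝒫_{r,n}`: ordered `r`-tuples of pairwise disjoint `n`-element subsets of
`{1,…,rn}` whose union is everything. -/
def parts (r n : ℕ) : Finset (Fin r → Finset (Fin (r * n))) :=
  Finset.univ.filter fun A =>
    (∀ m, (A m).card = n) ∧ (∀ m m', m ≠ m' → Disjoint (A m) (A m')) ∧
      Finset.univ.biUnion A = Finset.univ

/-! Expanding `det M(λ,X)` over permutations `σ`, the `σ`-term is a signed product of entries
of `V = (λ_k ^ ⌊j/r⌋)` times the monomial `∏_a ∏_{k ∈ σ(C_a)} X_{a,k}`, where `C_a` is the set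
of columns `j` with `j mod r = a`. Distinct squarefree monomials in independent standard Gaussians
are orthonormal in `L²`, so `E[det²] = ∑_A (∑_{σ(C_•) = A} term σ)²`. The inner sum is the
determinant of `V` with the entries outside the blocks `A_a × C_a` replaced by `0`; after
reordering rows and columns this matrix is block diagonal with Vandermonde blocks
`(λ_k ^ i)_{k ∈ A_a, i < n}`, of determinant `±Δ(A_a)`. -/

open MeasureTheory ProbabilityTheory Finset

section GaussianMoments

lemma integral_sq_gaussianReal_zero_one : ∫ x, x ^ 2 ∂gaussianReal 0 1 = 1 := by
  have h := variance_fun_id_gaussianReal (μ := 0) (v := 1)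
  rwa [variance_of_integral_eq_zero aemeasurable_id' integral_id_gaussianReal] at h

lemma integral_ite_mul_ite_gaussianReal (p q : Prop) [Decidable p] [Decidable q] :
    ∫ x, (if p then x else 1) * (if q then x else 1) ∂gaussianReal 0 1 =
      if p ↔ q then 1 else 0 := by
  by_cases hp : p <;> by_cases hq : q <;>
    simp [hp, hq, ← sq, integral_id_gaussianReal, integral_sq_gaussianReal_zero_one]

lemma integrable_ite_mul_ite_gaussianReal (p q : Prop) [Decidable p] [Decidable q] :
    Integrable (fun x => (if p then x else 1) * (if q then x else 1)) (gaussianReal 0 1) := by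
  have hid : Integrable (fun x : ℝ => x) (gaussianReal 0 1) :=
    (memLp_id_gaussianReal 1).integrable le_rfl
  have hsq : Integrable (fun x : ℝ => x ^ 2) (gaussianReal 0 1) :=
    (memLp_id_gaussianReal 2).integrable_sq
  by_cases hp : p <;> by_cases hq : q <;> simp [hp, hq, ← sq, hid, hsq]

variable {ι κ : Type*} [Fintype ι] [DecidableEq ι]

lemma prod_mul_prod_eq_prod_ite {M : Type*} [CommMonoid M] (S T : Finset ι) (x : ι → M) :
    (∏ i ∈ S, x i) * ∏ i ∈ T, x i =
      ∏ i, (if i ∈ S then x i else 1) * (if i ∈ T then x i else 1) := by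
  rw [prod_mul_distrib, prod_ite_mem, prod_ite_mem, univ_inter, univ_inter]

theorem integral_prod_mul_prod_gaussianReal (S T : Finset ι) :
    ∫ x : ι → ℝ, (∏ i ∈ S, x i) * ∏ i ∈ T, x i ∂(Measure.pi fun _ => gaussianReal 0 1) =
      if S = T then 1 else 0 := by
  simp_rw [prod_mul_prod_eq_prod_ite]
  rw [integral_fintype_prod_eq_prod
    fun i x => (if i ∈ S then x else 1) * (if i ∈ T then x else 1)]
  simp_rw [integral_ite_mul_ite_gaussianReal, Fintype.prod_boole, Finset.ext_iff]

theorem integrable_prod_mul_prod_gaussianReal (S T : Finset ι) :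
    Integrable (fun x : ι → ℝ => (∏ i ∈ S, x i) * ∏ i ∈ T, x i)
      (Measure.pi fun _ => gaussianReal 0 1) := by
  simp_rw [prod_mul_prod_eq_prod_ite]
  exact Integrable.fintype_prod
    (f := fun i x => (if i ∈ S then x else 1) * (if i ∈ T then x else 1))
    fun _ => integrable_ite_mul_ite_gaussianReal _ _

variable [Fintype κ]

theorem integral_prod_prod_mul_prod_prod_gaussianReal (S T : κ → Finset ι) :
    ∫ X : κ → ι → ℝ, (∏ a, ∏ i ∈ S a, X a i) * ∏ a, ∏ i ∈ T a, X a i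
        ∂(Measure.pi fun _ => Measure.pi fun _ => gaussianReal 0 1) =
      if S = T then 1 else 0 := by
  simp_rw [← prod_mul_distrib]
  rw [integral_fintype_prod_eq_prod (E := fun _ => ι → ℝ)
    fun a x => (∏ i ∈ S a, x i) * ∏ i ∈ T a, x i]
  simp_rw [integral_prod_mul_prod_gaussianReal, Fintype.prod_boole, funext_iff]

theorem integrable_prod_prod_mul_prod_prod_gaussianReal (S T : κ → Finset ι) :
    Integrable (fun X : κ → ι → ℝ => (∏ a, ∏ i ∈ S a, X a i) * ∏ a, ∏ i ∈ T a, X a i)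
      (Measure.pi fun _ => Measure.pi fun _ => gaussianReal 0 1) := by
  simp_rw [← prod_mul_distrib]
  exact Integrable.fintype_prod (E := ι → ℝ)
    (f := fun a x => (∏ i ∈ S a, x i) * ∏ i ∈ T a, x i)
    fun _ => integrable_prod_mul_prod_gaussianReal _ _

end GaussianMoments

lemma sum_sum_mul_boole_eq_sum_sq {α β R : Type*} [CommSemiring R] [DecidableEq β]
    (s : Finset α) (P : Finset β) (Φ : α → β) (hΦ : ∀ σ ∈ s, Φ σ ∈ P) (w : α → R) :
    ∑ σ ∈ s, ∑ τ ∈ s, w σ * w τ * (if Φ σ = Φ τ then 1 else 0) =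
      ∑ A ∈ P, (∑ σ ∈ s with Φ σ = A, w σ) ^ 2 := by
  calc ∑ σ ∈ s, ∑ τ ∈ s, w σ * w τ * (if Φ σ = Φ τ then 1 else 0)
      = ∑ σ ∈ s, w σ * ∑ τ ∈ s with Φ τ = Φ σ, w τ := by
        refine sum_congr rfl fun σ _ => ?_
        simp_rw [mul_sum, sum_filter, mul_boole, eq_comm]
    _ = ∑ A ∈ P, ∑ σ ∈ s with Φ σ = A, w σ * ∑ τ ∈ s with Φ τ = A, w τ := by
        rw [← sum_fiberwise_of_maps_to hΦ]
        refine sum_congr rfl fun A _ => sum_congr rfl fun σ hσ => ?_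
        rw [(mem_filter.mp hσ).2]
    _ = ∑ A ∈ P, (∑ σ ∈ s with Φ σ = A, w σ) ^ 2 := by
        simp_rw [← sum_mul, sq]

section ColouredMatrix

variable {m κ : Type*} [Fintype m] [DecidableEq m] [DecidableEq κ] (c : m → κ)

def colouredMatrix (V : Matrix m m ℝ) (X : κ → m → ℝ) : Matrix m m ℝ :=
  Matrix.of fun k j => V k j * X (c j) k

def maskedMatrix (V : Matrix m m ℝ) (A : κ → Finset m) : Matrix m m ℝ :=
  Matrix.of fun k j => if k ∈ A (c j) then V k j else 0

def classImage (σ : Equiv.Perm m) (a : κ) : Finset m :=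
  ({i | c i = a} : Finset m).image σ

def detTerm (V : Matrix m m ℝ) (σ : Equiv.Perm m) : ℝ :=
  Equiv.Perm.sign σ * ∏ i, V (σ i) i

lemma card_classImage (σ : Equiv.Perm m) (a : κ) : #(classImage c σ a) = #{i | c i = a} :=
  card_image_of_injective _ σ.injective

lemma disjoint_classImage (σ : Equiv.Perm m) {a b : κ} (hab : a ≠ b) :
    Disjoint (classImage c σ a) (classImage c σ b) :=
  (disjoint_image σ.injective).2 <| disjoint_filter.2 fun _ _ ha hb => hab (ha ▸ hb)

lemma biUnion_classImage [Fintype κ] (σ : Equiv.Perm m) : univ.biUnion (classImage c σ) = univ :=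
  eq_univ_of_forall fun k => mem_biUnion.2
    ⟨c (σ.symm k), mem_univ _, mem_image.2 ⟨σ.symm k, by simp, σ.apply_symm_apply k⟩⟩

lemma classImage_eq_iff {A : κ → Finset m} (hA : ∀ a, #(A a) = #{i | c i = a})
    (σ : Equiv.Perm m) : classImage c σ = A ↔ ∀ i, σ i ∈ A (c i) := by
  refine ⟨fun h i => h ▸ mem_image_of_mem σ (mem_filter.mpr ⟨mem_univ i, rfl⟩), fun h => ?_⟩
  funext a
  refine eq_of_subset_of_card_le (fun k hk => ?_) ?_
  · obtain ⟨i, hi, rfl⟩ := mem_image.mp hk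
    exact (mem_filter.mp hi).2 ▸ h i
  · rw [hA, card_classImage]

variable [Fintype κ]

lemma prod_comp_eq_prod_classImage (σ : Equiv.Perm m) (X : κ → m → ℝ) :
    ∏ i, X (c i) (σ i) = ∏ a, ∏ k ∈ classImage c σ a, X a k := by
  rw [← prod_fiberwise_of_maps_to (fun i _ => mem_univ (c i))]
  refine prod_congr rfl fun a _ => ?_
  rw [classImage, prod_image fun i _ j _ h => σ.injective h]
  exact prod_congr rfl fun i hi => by rw [(mem_filter.mp hi).2]

lemma det_colouredMatrix (V : Matrix m m ℝ) (X : κ → m → ℝ) :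
    (colouredMatrix c V X).det = ∑ σ, detTerm V σ * ∏ a, ∏ k ∈ classImage c σ a, X a k := by
  rw [Matrix.det_apply']
  refine sum_congr rfl fun σ _ => ?_
  simp only [colouredMatrix, Matrix.of_apply, prod_mul_distrib, detTerm, mul_assoc,
    prod_comp_eq_prod_classImage]

theorem integral_det_colouredMatrix_sq (V : Matrix m m ℝ) (P : Finset (κ → Finset m))
    (hP : ∀ σ, classImage c σ ∈ P) :
    ∫ X : κ → m → ℝ, (colouredMatrix c V X).det ^ 2
        ∂(Measure.pi fun _ => Measure.pi fun _ => gaussianReal 0 1) =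
      ∑ A ∈ P, (∑ σ with classImage c σ = A, detTerm V σ) ^ 2 := by
  conv_lhs => simp only [det_colouredMatrix, sq, sum_mul_sum, mul_mul_mul_comm]
  have hint (σ τ : Equiv.Perm m) := (integrable_prod_prod_mul_prod_prod_gaussianReal
    (classImage c σ) (classImage c τ)).const_mul (detTerm V σ * detTerm V τ)
  rw [integral_finsetSum _ fun σ _ => integrable_finsetSum _ fun τ _ => hint σ τ]
  simp_rw [integral_finsetSum _ fun τ _ => hint _ τ, integral_const_mul,
    integral_prod_prod_mul_prod_prod_gaussianReal]
  exact sum_sum_mul_boole_eq_sum_sq _ P _ (fun σ _ => hP σ) _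

lemma sum_detTerm_classImage_eq_det_maskedMatrix (V : Matrix m m ℝ) {A : κ → Finset m}
    (hA : ∀ a, #(A a) = #{i | c i = a}) :
    ∑ σ with classImage c σ = A, detTerm V σ = (maskedMatrix c V A).det := by
  rw [Matrix.det_apply', sum_filter]
  refine sum_congr rfl fun σ _ => ?_
  simp only [classImage_eq_iff c hA, detTerm, maskedMatrix, Matrix.of_apply, prod_ite_zero,
    mem_univ, true_implies]
  split_ifs <;> simp

end ColouredMatrix

lemma det_vandermonde_orderEmbOfFin {N m : ℕ} (lam : Fin N → ℝ) (A : Finset (Fin N))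
    (h : #A = m) : (Matrix.vandermonde fun i => lam (A.orderEmbOfFin h i)).det = vdm lam A := by
  set g := A.orderEmbOfFin h
  rw [Matrix.det_vandermonde, vdm, prod_sigma']
  refine prod_bij (fun q _ => (g q.1, g q.2)) ?_ ?_ ?_ fun _ _ => rfl
  · rintro ⟨i, j⟩ hij
    simpa [g] using g.strictMono (mem_Ioi.1 (mem_sigma.1 hij).2)
  · rintro ⟨i, j⟩ - ⟨i', j'⟩ - h
    simp only [Prod.mk.injEq, g.injective.eq_iff] at h
    rw [h.1, h.2]
  · rintro ⟨x, y⟩ hxy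
    simp only [mem_filter, mem_product] at hxy
    obtain ⟨⟨hx, hy⟩, hlt⟩ := hxy
    obtain ⟨i, rfl⟩ : x ∈ Set.range g := by rwa [range_orderEmbOfFin]
    obtain ⟨j, rfl⟩ : y ∈ Set.range g := by rwa [range_orderEmbOfFin]
    exact ⟨⟨i, j⟩, by simpa using g.lt_iff_lt.1 hlt, rfl⟩

section Blocks

variable {r n : ℕ}

def residue (hr : 0 < r) (j : Fin (r * n)) : Fin r := ⟨j % r, Nat.mod_lt _ hr⟩

def powMatrix (r : ℕ) (lam : Fin (r * n) → ℝ) : Matrix (Fin (r * n)) (Fin (r * n)) ℝ :=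
  Matrix.of fun k j => lam k ^ (j.val / r)

lemma magicM_eq_colouredMatrix (hr : 0 < r) (lam : Fin (r * n) → ℝ)
    (X : Fin r → Fin (r * n) → ℝ) :
    MagicM r n hr lam (Matrix.of X) = colouredMatrix (residue hr) (powMatrix r lam) X :=
  rfl

/-- Column `a + r k` has residue `a` and carries the exponent `k`. -/
def colEquiv (r n : ℕ) : Fin n × Fin r ≃ Fin (r * n) :=
  finProdFinEquiv.trans (finCongr (Nat.mul_comm n r))

lemma residue_colEquiv (hr : 0 < r) (p : Fin n × Fin r) : residue hr (colEquiv r n p) = p.2 :=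
  Fin.ext <| by simp [residue, colEquiv, Nat.mod_eq_of_lt p.2.isLt]

lemma colEquiv_val_div (hr : 0 < r) (p : Fin n × Fin r) : (colEquiv r n p : ℕ) / r = p.1 := by
  simp [colEquiv, Nat.add_mul_div_left _ _ hr, Nat.div_eq_of_lt p.2.isLt]

lemma card_filter_residue_eq (hr : 0 < r) (a : Fin r) :
    #{j : Fin (r * n) | residue hr j = a} = n := by
  rw [← card_equiv (colEquiv r n) (s := {p | p.2 = a}) fun p => by simp [residue_colEquiv hr],
    show ({p | p.2 = a} : Finset (Fin n × Fin r)) = univ ×ˢ {a} by ext ⟨k, b⟩; simp [eq_comm]]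
  simp

lemma classImage_residue_mem_parts (hr : 0 < r) (σ : Equiv.Perm (Fin (r * n))) :
    classImage (residue hr) σ ∈ parts r n := by
  simp only [parts, mem_filter, mem_univ, true_and, card_classImage, card_filter_residue_eq,
    implies_true, biUnion_classImage, and_true]
  exact fun a b => disjoint_classImage _ σ

variable {A : Fin r → Finset (Fin (r * n))} (hcard : ∀ a, #(A a) = n)

def partsEnum (p : Fin n × Fin r) : Fin (r * n) := (A p.2).orderEmbOfFin (hcard p.2) p.1

lemma partsEnum_mem (p : Fin n × Fin r) : partsEnum hcard p ∈ A p.2 :=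
  orderEmbOfFin_mem _ _ _

lemma partsEnum_bijective (hdisj : ∀ a b, a ≠ b → Disjoint (A a) (A b)) :
    Function.Bijective (partsEnum hcard) := by
  refine (Fintype.bijective_iff_injective_and_card _).2 ⟨?_, by simp [mul_comm]⟩
  rintro ⟨k, a⟩ ⟨l, b⟩ hkl
  obtain rfl : a = b := by
    by_contra hab
    exact disjoint_left.1 (hdisj a b hab) (partsEnum_mem hcard (k, a))
      (hkl ▸ partsEnum_mem hcard (l, b))
  simpa using ((A a).orderEmbOfFin (hcard a)).injective hkl

lemma maskedMatrix_submatrix_eq_blockDiagonal (hr : 0 < r) (lam : Fin (r * n) → ℝ)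
    (hdisj : ∀ a b, a ≠ b → Disjoint (A a) (A b)) :
    (maskedMatrix (residue hr) (powMatrix r lam) A).submatrix (partsEnum hcard) (colEquiv r n) =
      Matrix.blockDiagonal fun a => Matrix.vandermonde fun k => lam (partsEnum hcard (k, a)) := by
  ext ⟨k, a⟩ ⟨l, b⟩
  simp only [maskedMatrix, powMatrix, Matrix.submatrix_apply, Matrix.of_apply,
    Matrix.blockDiagonal_apply, Matrix.vandermonde_apply, residue_colEquiv, colEquiv_val_div hr]
  by_cases hab : a = b
  · subst hab
    rw [if_pos (partsEnum_mem hcard (k, a)), if_pos rfl]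
  · rw [if_neg fun h => disjoint_left.1 (hdisj a b hab) (partsEnum_mem hcard (k, a)) h,
      if_neg hab]

end Blocks

lemma det_maskedMatrix_sq_eq_prod_vdm_sq {r n : ℕ} (hr : 0 < r) (lam : Fin (r * n) → ℝ)
    {A : Fin r → Finset (Fin (r * n))} (hA : A ∈ parts r n) :
    (maskedMatrix (residue hr) (powMatrix r lam) A).det ^ 2 = ∏ a, vdm lam (A a) ^ 2 := by
  rw [parts, mem_filter] at hA
  obtain ⟨-, hcard, hdisj, -⟩ := hA
  have habs := Matrix.abs_det_submatrix_equiv_equiv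
    (Equiv.ofBijective _ (partsEnum_bijective hcard hdisj)) (colEquiv r n)
    (maskedMatrix (residue hr) (powMatrix r lam) A)
  rw [Equiv.coe_ofBijective, maskedMatrix_submatrix_eq_blockDiagonal hcard hr lam hdisj,
    Matrix.det_blockDiagonal] at habs
  rw [← sq_abs, ← habs, sq_abs, ← prod_pow]
  exact prod_congr rfl fun a _ =>
    congrArg (· ^ 2) (det_vandermonde_orderEmbOfFin lam (A a) (hcard a))

theorem statement2_general (r n : ℕ) (hr : 0 < r) (lam : Fin (r * n) → ℝ) :
    (∫ X : Fin r → Fin (r * n) → ℝ,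
        ((MagicM r n hr lam (Matrix.of X)).det) ^ 2
        ∂(Measure.pi fun _ : Fin r => Measure.pi fun _ : Fin (r * n) =>
            gaussianReal 0 1)) =
      ∑ A ∈ parts r n, ∏ j : Fin r, vdm lam (A j) ^ 2 := by
  simp_rw [magicM_eq_colouredMatrix]
  rw [integral_det_colouredMatrix_sq _ _ _ (classImage_residue_mem_parts hr)]
  refine sum_congr rfl fun A hA => ?_
  have hcard (a : Fin r) : #(A a) = #{j : Fin (r * n) | residue hr j = a} := by
    rw [card_filter_residue_eq, (mem_filter.1 hA).2.1 a]
  rw [sum_detTerm_classImage_eq_det_maskedMatrix _ _ hcard,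
    det_maskedMatrix_sq_eq_prod_vdm_sq hr lam hA]

/-- The entries of `X` are i.i.d. standard real Gaussians, i.e. `X` is distributed
according to the product over all entries of `N(0,1)`. -/
theorem statement2 (r n : ℕ) (hr : 0 < r) (hn : 0 < n) (lam : Fin (r * n) → ℝ) :
    (∫ X : Fin r → Fin (r * n) → ℝ,
        ((MagicM r n hr lam (Matrix.of X)).det) ^ 2
        ∂(Measure.pi fun _ : Fin r => Measure.pi fun _ : Fin (r * n) =>
            gaussianReal 0 1)) =
      ∑ A ∈ parts r n, ∏ j : Fin r, vdm lam (A j) ^ 2 :=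
  statement2_general r n hr lam
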